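/- Let H be a quaternionic Hilbert space, J ∈ B(H) an anti self-adjoint unitary operator, and ι an imaginary unit of ℍ. Then every bounded ℂ_ι-linear operator T on the complex subspace H₊ := {u ∈ H : Ju = uι} admits a unique bounded right ℍ-linear extension T̃ ∈ B(H); moreover ‖T̃‖ = ‖T‖, J T̃ = T̃ J, (T̃)* = (T*)~, (ST)~ = S̃ T̃ for S ∈ B(H₊), and T̃ ≥ 0 whenever T ≥ 0. -/

import Mathlib

noncomputable section

notation "ℍ" => Quaternion ℝ

open MeasureTheory Filter

/-- Borel σ-algebra on the quaternions. -/
instance : MeasurableSpace ℍ := borel ℍ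

instance : BorelSpace ℍ := ⟨rfl⟩

/-- A quaternionic (right) Hilbert space structure on a normed additive group `H`:
a right scalar multiplication by quaternions together with an ℍ-valued Hermitian
scalar product compatible with the norm.  (Completeness of `H` is assumed
separately via `[CompleteSpace H]`.) -/
structure QHS (H : Type) [NormedAddCommGroup H] where
  smul : H → ℍ → H
  inn : H → H → ℍ
  add_smul' : ∀ (u v : H) (q : ℍ), smul (u + v) q = smul u q + smul v q
  smul_add' : ∀ (u : H) (p q : ℍ), smul u (p + q) = smul u p + smul u q
  smul_mul' : ∀ (u : H) (p q : ℍ), smul u (p * q) = smul (smul u p) q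
  smul_one' : ∀ u : H, smul u 1 = u
  inn_add_right : ∀ u v w : H, inn u (v + w) = inn u v + inn u w
  inn_smul_right : ∀ (u v : H) (q : ℍ), inn u (smul v q) = inn u v * q
  inn_conj : ∀ u v : H, inn u v = star (inn v u)
  inn_self_real : ∀ u : H, inn u u = (((inn u u).re : ℝ) : ℍ)
  norm_sq' : ∀ u : H, ‖u‖ ^ 2 = (inn u u).re

variable {H : Type} [NormedAddCommGroup H]

/-- The graph of an operator `T` with domain `D`. -/
def graphOf (T : H → H) (D : Set H) : Set (H × H) := {p | p.1 ∈ D ∧ p.2 = T p.1}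

/-- Domain of a graph. -/
def graphDom (G : Set (H × H)) : Set H := {u | ∃ w, (u, w) ∈ G}

/-- A function extracted from a graph (by choice). -/
def graphFun (G : Set (H × H)) : H → H := fun u =>
  letI : Nonempty H := ⟨0⟩
  Classical.epsilon fun w => (u, w) ∈ G

/-- Boundedness of an everywhere defined operator. -/
def BoundedOp (T : H → H) : Prop := ∃ C : ℝ, ∀ u : H, ‖T u‖ ≤ C * ‖u‖

/-- The operator norm. -/
def opNorm (T : H → H) : ℝ := sInf {C : ℝ | 0 ≤ C ∧ ∀ u : H, ‖T u‖ ≤ C * ‖u‖}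

/-- Closed operator: the graph is closed. -/
def ClosedOp (T : H → H) (D : Set H) : Prop := IsClosed (graphOf T D)

/-- The domain `D(T²)`. -/
def D2 (T : H → H) (D : Set H) : Set H := {u ∈ D | T u ∈ D}

/-- The slice complex plane `ℂ_ι = {a + ι b}` determined by an imaginary unit `ι`. -/
def Cslice (ι : ℍ) : Set ℍ :=
  {x : ℍ | ∃ a b : ℝ, x = ((a : ℝ) : ℍ) + ι * ((b : ℝ) : ℍ)}

/-- The closed upper half slice plane `ℂ_ι⁺ = {a + ι b : b ≥ 0}`. -/
def Cplus (ι : ℍ) : Set ℍ :=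
  {x : ℍ | ∃ a b : ℝ, 0 ≤ b ∧ x = ((a : ℝ) : ℍ) + ι * ((b : ℝ) : ℍ)}

namespace QHS

variable (𝒮 : QHS H)

/-- Right ℍ-linearity of an everywhere defined map. -/
def RightLinear (T : H → H) : Prop :=
  (∀ u v : H, T (u + v) = T u + T v) ∧ ∀ (u : H) (q : ℍ), T (𝒮.smul u q) = 𝒮.smul (T u) q

/-- A (right ℍ-linear) subspace. -/
def IsSubspace (D : Set H) : Prop :=
  (0 : H) ∈ D ∧ (∀ u ∈ D, ∀ v ∈ D, u + v ∈ D) ∧ ∀ u ∈ D, ∀ q : ℍ, 𝒮.smul u q ∈ D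

/-- Right ℍ-linearity on a domain `D`. -/
def RightLinearOn (T : H → H) (D : Set H) : Prop :=
  (∀ u ∈ D, ∀ v ∈ D, T (u + v) = T u + T v) ∧
    ∀ u ∈ D, ∀ q : ℍ, T (𝒮.smul u q) = 𝒮.smul (T u) q

/-- `S` is the adjoint of `T` (both everywhere defined):  `⟨S u|v⟩ = ⟨u|T v⟩`. -/
def AdjointPair (T S : H → H) : Prop := ∀ u v : H, 𝒮.inn (S u) v = 𝒮.inn u (T v)

def SelfAdjointOp (T : H → H) : Prop := ∀ u v : H, 𝒮.inn (T u) v = 𝒮.inn u (T v)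

def AntiSelfAdjointOp (T : H → H) : Prop := ∀ u v : H, 𝒮.inn (T u) v = -𝒮.inn u (T v)

/-- Positivity: `⟨u|T u⟩` is real and non-negative. -/
def PositiveOp (T : H → H) : Prop :=
  ∀ u : H, 𝒮.inn u (T u) = ((((𝒮.inn u (T u)).re : ℝ)) : ℍ) ∧ 0 ≤ (𝒮.inn u (T u)).re

/-- Positivity on a domain. -/
def PositiveOn (T : H → H) (D : Set H) : Prop :=
  ∀ u ∈ D, 𝒮.inn u (T u) = ((((𝒮.inn u (T u)).re : ℝ)) : ℍ) ∧ 0 ≤ (𝒮.inn u (T u)).re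

/-- Unitarity: right linear, surjective, inner-product preserving. -/
def UnitaryOp (T : H → H) : Prop :=
  𝒮.RightLinear T ∧ Function.Surjective T ∧ ∀ u v : H, 𝒮.inn (T u) (T v) = 𝒮.inn u v

/-- The domain of the adjoint of `T : D → H`. -/
def adjDom (T : H → H) (D : Set H) : Set H :=
  {u : H | ∃ w : H, ∀ v ∈ D, 𝒮.inn w v = 𝒮.inn u (T v)}

/-- The adjoint operator of `T : D → H` (defined by choice; it is the genuine
adjoint when `D` is dense). -/
def adjOp (T : H → H) (D : Set H) : H → H := fun u =>
  letI := Classical.propDecidable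
  if h : ∃ w : H, ∀ v ∈ D, 𝒮.inn w v = 𝒮.inn u (T v) then h.choose else 0

/-- Self-adjointness of an unbounded operator: `T* = T` (same domain, same values). -/
def SelfAdjointUnb (T : H → H) (D : Set H) : Prop :=
  𝒮.adjDom T D = D ∧ ∀ u ∈ D, 𝒮.adjOp T D u = T u

/-- Normality of an unbounded operator: `T T* = T* T`. -/
def NormalUnb (T : H → H) (D : Set H) : Prop :=
  ({u ∈ D | T u ∈ 𝒮.adjDom T D} = {u ∈ 𝒮.adjDom T D | 𝒮.adjOp T D u ∈ D}) ∧
    ∀ u ∈ D, T u ∈ 𝒮.adjDom T D → 𝒮.adjOp T D (T u) = T (𝒮.adjOp T D u)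

/-- The positive square root of a positive bounded operator (by choice). -/
def posSqrt (T : H → H) : H → H :=
  letI : Nonempty (H → H) := ⟨id⟩
  Classical.epsilon fun R : H → H =>
    𝒮.RightLinear R ∧ BoundedOp R ∧ 𝒮.PositiveOp R ∧ 𝒮.SelfAdjointOp R ∧
      ∀ u : H, R (R u) = T u

/-- The operator `Δ_q(T) = T² - T (2 Re q) + |q|² 1`. -/
def Delta (T : H → H) (q : ℍ) : H → H := fun u =>
  T (T u) - 𝒮.smul (T u) (((2 * q.re : ℝ)) : ℍ) + 𝒮.smul u (((‖q‖ ^ 2 : ℝ)) : ℍ)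

/-- Membership in the spherical resolvent set: `Δ_q(T)` is injective with dense range
and bounded inverse. -/
def InSphResolvent (T : H → H) (D : Set H) (q : ℍ) : Prop :=
  (∀ u ∈ D2 T D, 𝒮.Delta T q u = 0 → u = 0) ∧
    Dense (𝒮.Delta T q '' D2 T D) ∧
    ∃ C : ℝ, ∀ u ∈ D2 T D, ‖u‖ ≤ C * ‖𝒮.Delta T q u‖

/-- The spherical spectrum. -/
def sphSpectrum (T : H → H) (D : Set H) : Set ℍ := {q | ¬𝒮.InSphResolvent T D q}

/-- The spherical point spectrum. -/
def sphPointSpectrum (T : H → H) (D : Set H) : Set ℍ :=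
  {q | ∃ u ∈ D2 T D, u ≠ 0 ∧ 𝒮.Delta T q u = 0}

/-- The spherical residual spectrum. -/
def sphResidualSpectrum (T : H → H) (D : Set H) : Set ℍ :=
  {q | (∀ u ∈ D2 T D, 𝒮.Delta T q u = 0 → u = 0) ∧
    ¬Dense (𝒮.Delta T q '' D2 T D)}

/-- The spherical continuous spectrum. -/
def sphContinuousSpectrum (T : H → H) (D : Set H) : Set ℍ :=
  {q | (∀ u ∈ D2 T D, 𝒮.Delta T q u = 0 → u = 0) ∧
    Dense (𝒮.Delta T q '' D2 T D) ∧
    ¬∃ C : ℝ, ∀ u ∈ D2 T D, ‖u‖ ≤ C * ‖𝒮.Delta T q u‖}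

/-- A Hilbert basis of a quaternionic Hilbert space. -/
def IsHilbertBasis (N : Set H) : Prop :=
  (∀ z ∈ N, ‖z‖ = 1) ∧ (∀ z ∈ N, ∀ w ∈ N, z ≠ w → 𝒮.inn z w = 0) ∧
    ∀ u : H, (∀ z ∈ N, 𝒮.inn z u = 0) → u = 0

/-- `L` is the left scalar multiplication induced by the Hilbert basis `N`:
`L_q u = Σ_{z ∈ N} z q ⟨z|u⟩`. -/
def IsInducedLSM (N : Set H) (L : ℍ → H → H) : Prop :=
  ∀ (q : ℍ) (u : H),
    HasSum (fun z : N => 𝒮.smul (z : H) (q * 𝒮.inn (z : H) u)) (L q u)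

/-- `L` is a left scalar multiplication of `H` (induced by some Hilbert basis). -/
def IsLSM (L : ℍ → H → H) : Prop :=
  ∃ N : Set H, 𝒮.IsHilbertBasis N ∧ 𝒮.IsInducedLSM N L

/-- The orthogonal complement of a subset. -/
def orthC (S : Set H) : Set H := {u : H | ∀ v ∈ S, 𝒮.inn u v = 0}

/-- The complex subspace `H₊^{Jι} = {u : J u = u ι}`. -/
def Hplus (J : H → H) (ι : ℍ) : Set H := {u : H | J u = 𝒮.smul u ι}

/-- The complex subspace `H₋^{Jι} = {u : J u = -u ι}`. -/
def Hminus (J : H → H) (ι : ℍ) : Set H := {u : H | J u = -𝒮.smul u ι}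

end QHS

/-- A quaternionic projection valued measure (qPVM) over `ℂ_ι⁺` in `H`. -/
structure IsQPVM (𝒮 : QHS H) (ι : ℍ) (P : Set ℍ → H → H) : Prop where
  proj_linear : ∀ E : Set ℍ, MeasurableSet E → E ⊆ Cplus ι → 𝒮.RightLinear (P E)
  proj_bounded : ∀ E : Set ℍ, MeasurableSet E → E ⊆ Cplus ι → BoundedOp (P E)
  proj_idem : ∀ E : Set ℍ, MeasurableSet E → E ⊆ Cplus ι → ∀ u, P E (P E u) = P E u
  proj_sa : ∀ E : Set ℍ, MeasurableSet E → E ⊆ Cplus ι → 𝒮.SelfAdjointOp (P E)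
  proj_pos : ∀ E : Set ℍ, MeasurableSet E → E ⊆ Cplus ι → 𝒮.PositiveOp (P E)
  total : ∀ u : H, P (Cplus ι) u = u
  inter : ∀ E F : Set ℍ, MeasurableSet E → E ⊆ Cplus ι → MeasurableSet F → F ⊆ Cplus ι →
    ∀ u, P (E ∩ F) u = P E (P F u)
  sigma_add : ∀ E : ℕ → Set ℍ, (∀ n, MeasurableSet (E n) ∧ E n ⊆ Cplus ι) →
    (Pairwise fun n m => Disjoint (E n) (E m)) →
    ∀ u : H, HasSum (fun n => P (E n) u) (P (⋃ n, E n) u)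

/-- The support of a qPVM: points of `ℂ_ι⁺` all of whose relatively open neighbourhoods
have non-zero projection. -/
def suppP (ι : ℍ) (P : Set ℍ → H → H) : Set ℍ :=
  {x ∈ Cplus ι | ∀ U : Set ℍ, IsOpen U → x ∈ U → ∃ u : H, P (U ∩ Cplus ι) u ≠ 0}

/-- An intertwining quaternionic PVM (iqPVM): a qPVM together with a commuting left
scalar multiplication. -/
def IsIQPVM (𝒮 : QHS H) (ι : ℍ) (P : Set ℍ → H → H) (L : ℍ → H → H) : Prop :=
  IsQPVM 𝒮 ι P ∧ 𝒮.IsLSM L ∧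
    ∀ E : Set ℍ, MeasurableSet E → E ⊆ Cplus ι →
      ∀ (q : ℍ) (u : H), P E (L q u) = L q (P E u)

/-- Data of a simple function: coefficients and pairwise disjoint Borel subsets of `ℂ_ι⁺`. -/
def IsSimpleData (ι : ℍ) {n : ℕ} (c : Fin n → ℍ) (E : Fin n → Set ℍ) : Prop :=
  (∀ ℓ, MeasurableSet (E ℓ) ∧ E ℓ ⊆ Cplus ι) ∧
    Pairwise fun ℓ ℓ' => Disjoint (E ℓ) (E ℓ')

/-- `S = ∫ φ d𝒫`, characterized by uniform approximation (on the support of `P`)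
by simple functions together with approximation of `S` by the corresponding
elementary integrals `Σ_ℓ L_{c_ℓ} P(E_ℓ)`. -/
def IsBoundedIntegral (𝒮 : QHS H) (ι : ℍ) (P : Set ℍ → H → H) (L : ℍ → H → H)
    (φ : ℍ → ℍ) (S : H → H) : Prop :=
  ∀ ε : ℝ, 0 < ε → ∃ (n : ℕ) (c : Fin n → ℍ) (E : Fin n → Set ℍ),
    IsSimpleData ι c E ∧
    (∀ x ∈ suppP ι P, ‖φ x - ∑ ℓ, Set.indicator (E ℓ) (fun _ => c ℓ) x‖ ≤ ε) ∧
    ∀ u : H, ‖S u - ∑ ℓ, L (c ℓ) (P (E ℓ) u)‖ ≤ ε * ‖u‖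

/-- The integral of a bounded measurable function with respect to an iqPVM
(defined by choice from the characterizing property). -/
def bInt (𝒮 : QHS H) (ι : ℍ) (P : Set ℍ → H → H) (L : ℍ → H → H) (φ : ℍ → ℍ) : H → H :=
  letI : Nonempty (H → H) := ⟨id⟩
  Classical.epsilon fun S : H → H => IsBoundedIntegral 𝒮 ι P L φ S

/-- The `P`-essential supremum norm `‖φ‖_∞^{(P)}`. -/
def essSupNorm (ι : ℍ) (P : Set ℍ → H → H) (φ : ℍ → ℍ) : ℝ :=
  sInf {k : ℝ | 0 ≤ k ∧ ∀ u : H, P {x ∈ Cplus ι | k < ‖φ x‖} u = 0}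

/-- `μ` is the positive Borel measure `μ_u^{(P)} : E ↦ ⟨u|P(E)u⟩`. -/
def muMatches (𝒮 : QHS H) (ι : ℍ) (P : Set ℍ → H → H) (u : H) (μ : Measure ℍ) : Prop :=
  ∀ E : Set ℍ, MeasurableSet E →
    μ E = ENNReal.ofReal ((𝒮.inn u (P (E ∩ Cplus ι) u)).re)

/-- The natural domain `D_f = {u : f ∈ L²(μ_u^{(P)})}` of `∫ f d𝒫`. -/
def Dnat (𝒮 : QHS H) (ι : ℍ) (P : Set ℍ → H → H) (f : ℍ → ℍ) : Set H :=
  {u : H | ∃ μ : Measure ℍ, muMatches 𝒮 ι P u μ ∧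
    (∫⁻ x, ENNReal.ofReal (‖f x‖ ^ 2) ∂μ) < ⊤}

/-- The truncation of `f` at level `n`. -/
def trunc (f : ℍ → ℍ) (n : ℕ) : ℍ → ℍ := fun x => if ‖f x‖ ≤ (n : ℝ) then f x else 0

/-- The integral of a possibly unbounded measurable function with respect to an iqPVM:
the strong limit of the integrals of its truncations. -/
def uInt (𝒮 : QHS H) (ι : ℍ) (P : Set ℍ → H → H) (L : ℍ → H → H) (f : ℍ → ℍ) : H → H :=
  fun u =>
    letI : Nonempty H := ⟨0⟩
    limUnder atTop fun n : ℕ => bInt 𝒮 ι P L (trunc f n) u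

/-- The inverse `(1 + T*T)⁻¹` of `1 + T*T` (by choice). -/
def CT (𝒮 : QHS H) (T : H → H) (D : Set H) : H → H :=
  letI : Nonempty (H → H) := ⟨id⟩
  Classical.epsilon fun C : H → H =>
    (∀ y : H, C y ∈ D ∧ T (C y) ∈ 𝒮.adjDom T D ∧ C y + 𝒮.adjOp T D (T (C y)) = y) ∧
      ∀ u ∈ D, T u ∈ 𝒮.adjDom T D → C (u + 𝒮.adjOp T D (T u)) = u

/-- The bounded transform `Z_T = T (1 + T*T)^{-1/2}`. -/
def ZT (𝒮 : QHS H) (T : H → H) (D : Set H) : H → H := fun u =>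
  T (𝒮.posSqrt (CT 𝒮 T D) u)

end

/-!
Fix an imaginary unit `j` anticommuting with `ι`. Right multiplication by `j` exchanges
`H₊ = {J u = u ι}` and `H₋ = {J u = -u ι}`, and `u = u₊ + u₋` with `u₊ = ½ (u - (J u) ι) ∈ H₊`,
`u₋ = ½ (u + (J u) ι) ∈ H₋`; hence every `u` is `a - c j` with `a, c ∈ H₊`. A right ℍ-linear
extension must send `a - c j` to `T a - (T c) j`, which proves uniqueness, and conversely this
formula is right ℍ-linear because every quaternion is `z₁ + z₂ j` with `z₁, z₂ ∈ ℂ_ι` and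
`z j = j z̄`. Since `J` is unitary, `⟨H₊|H₋⟩` has zero real part, so `‖a - c j‖² = ‖a‖² + ‖c‖²`,
which gives `‖T̃‖ = ‖T‖`. `J T̃` and `T̃ J` are right linear and agree on `H₊`, so they are equal.
For positivity, `⟨a - c j|T a - (T c) j⟩ = ⟨a|T a⟩ + ⟨c|T c⟩` because `⟨a|T c⟩ ∈ ℂ_ι` and a
positive `T` is symmetric on `H₊` by polarisation.
-/

instance : CharZero ℍ := ⟨fun m n h => by simpa using congrArg QuaternionAlgebra.re h⟩

lemma Quaternion.sq_eq_neg_one_iff {q : ℍ} :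
    q ^ 2 = -1 ↔ q.re = 0 ∧ q.imI ^ 2 + q.imJ ^ 2 + q.imK ^ 2 = 1 := by
  constructor
  · intro h
    have hn : normSq q = 1 := by
      rw [normSq_eq_norm_mul_self, ← sq, ← norm_pow, h, norm_neg, norm_one]
    have hre : q.re = 0 := sq_eq_neg_normSq.mp (by rw [h, hn]; simp)
    rw [normSq_def', hre] at hn
    exact ⟨hre, by linarith⟩
  · rintro ⟨hre, hn⟩
    have : normSq q = 1 := by rw [normSq_def', hre]; linarith
    rw [sq_eq_neg_normSq.mpr hre, this]
    simp

lemma Quaternion.star_eq_neg_of_sq_eq_neg_one {q : ℍ} (h : q ^ 2 = -1) : star q = -q :=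
  star_eq_neg.mpr (sq_eq_neg_one_iff.mp h).1

lemma Quaternion.norm_eq_one_of_sq_eq_neg_one {q : ℍ} (h : q ^ 2 = -1) : ‖q‖ = 1 :=
  (pow_eq_one_iff_of_nonneg (norm_nonneg q) two_ne_zero).mp (by
    rw [← norm_pow, h, norm_neg, norm_one])

lemma Quaternion.re_mul_comm (a b : ℍ) : (a * b).re = (b * a).re := by
  simp only [re_mul]; ring

lemma Quaternion.inv_two_mul_comm (q : ℍ) : 2⁻¹ * q = q * 2⁻¹ :=
  (Nat.cast_commute 2 q).inv_left₀.eq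

lemma Quaternion.exists_sq_eq_neg_one_anticomm {ι : ℍ} (hι : ι ^ 2 = -1) :
    ∃ j : ℍ, j ^ 2 = -1 ∧ ι * j = -(j * ι) := by
  obtain ⟨hre, hnorm⟩ := sq_eq_neg_one_iff.mp hι
  obtain ⟨b, c, hbc, hperp⟩ : ∃ b c : ℝ, b ^ 2 + c ^ 2 = 1 ∧ b * ι.imI + c * ι.imJ = 0 := by
    rcases eq_or_ne (ι.imI ^ 2 + ι.imJ ^ 2) 0 with h0 | h0
    · exact ⟨1, 0, by norm_num, by nlinarith [sq_nonneg ι.imI, sq_nonneg ι.imJ]⟩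
    · set s := √(ι.imI ^ 2 + ι.imJ ^ 2)
      have hs : s ^ 2 = ι.imI ^ 2 + ι.imJ ^ 2 := Real.sq_sqrt (by positivity)
      have hs0 : s ≠ 0 := by positivity
      refine ⟨-ι.imJ / s, ι.imI / s, ?_, ?_⟩
      · field_simp; linear_combination -hs
      · field_simp; ring
  obtain ⟨j, hj0, hj1, hj2, hj3⟩ :
      ∃ j : ℍ, j.re = 0 ∧ j.imI = b ∧ j.imJ = c ∧ j.imK = 0 := ⟨⟨0, b, c, 0⟩, rfl, rfl, rfl, rfl⟩
  refine ⟨j, sq_eq_neg_one_iff.mpr ⟨hj0, by rw [hj1, hj2, hj3]; linear_combination hbc⟩, ?_⟩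
  ext <;> simp only [re_mul, imI_mul, imJ_mul, imK_mul, re_neg, imI_neg, imJ_neg, imK_neg,
    hre, hj0, hj1, hj2, hj3]
  · linear_combination -2 * hperp
  all_goals ring

lemma Quaternion.commute_iff_mem_Cslice {ι z : ℍ} (hι : ι ^ 2 = -1) :
    Commute ι z ↔ z ∈ Cslice ι := by
  obtain ⟨hre, hnorm⟩ := sq_eq_neg_one_iff.mp hι
  constructor
  · intro h
    have h1 := congrArg QuaternionAlgebra.imI h.eq
    have h2 := congrArg QuaternionAlgebra.imJ h.eq
    have h3 := congrArg QuaternionAlgebra.imK h.eq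
    simp only [imI_mul, imJ_mul, imK_mul, hre] at h1 h2 h3
    -- the imaginary part of `z` is its projection onto `ι`, since their cross product vanishes
    refine ⟨z.re, ι.imI * z.imI + ι.imJ * z.imJ + ι.imK * z.imK, ?_⟩
    ext <;> simp [hre]
    · linear_combination (-z.imI) * hnorm - ι.imJ / 2 * h3 + ι.imK / 2 * h2
    · linear_combination (-z.imJ) * hnorm + ι.imI / 2 * h3 - ι.imK / 2 * h1
    · linear_combination (-z.imK) * hnorm - ι.imI / 2 * h2 + ι.imJ / 2 * h1
  · rintro ⟨a, b, rfl⟩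
    exact (coe_commute a ι).symm.add_right ((Commute.refl ι).mul_right (coe_commute b ι).symm)

lemma Quaternion.neg_one_mem_Cslice (ι : ℍ) : (-1 : ℍ) ∈ Cslice ι := ⟨-1, 0, by simp⟩

lemma Quaternion.mem_Cslice_self (ι : ℍ) : ι ∈ Cslice ι := ⟨0, 1, by simp⟩

lemma Quaternion.star_mem_Cslice {ι z : ℍ} (hι : ι ^ 2 = -1) (hz : z ∈ Cslice ι) :
    star z ∈ Cslice ι := by
  have h := ((commute_iff_mem_Cslice hι).2 hz).star_star
  rw [star_eq_neg_of_sq_eq_neg_one hι, Commute.neg_left_iff] at h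
  exact (commute_iff_mem_Cslice hι).1 h

lemma Quaternion.mul_eq_mul_star_of_mem_Cslice {ι j z : ℍ} (hι : ι ^ 2 = -1)
    (hιj : ι * j = -(j * ι)) (hz : z ∈ Cslice ι) : z * j = j * star z := by
  obtain ⟨a, b, rfl⟩ := hz
  rw [star_add, star_mul, star_coe, star_coe, star_eq_neg_of_sq_eq_neg_one hι, add_mul, mul_add,
    coe_mul_eq_smul, mul_coe_eq_smul, mul_coe_eq_smul, smul_mul_assoc, hιj, coe_mul_eq_smul,
    mul_smul_comm, mul_neg, smul_neg]

lemma Quaternion.exists_mem_Cslice_add_mul {ι j : ℍ} (hι : ι ^ 2 = -1) (hj : j ^ 2 = -1)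
    (hιj : ι * j = -(j * ι)) (q : ℍ) : ∃ z₁ ∈ Cslice ι, ∃ z₂ ∈ Cslice ι, q = z₁ + z₂ * j := by
  have hιι : ∀ x, ι * (ι * x) = -x := fun x => by rw [← mul_assoc, ← sq, hι, neg_one_mul]
  have hxιι : ∀ x, x * ι * ι = -x := fun x => by rw [mul_assoc, ← sq, hι, mul_neg_one]
  have hcomm : Commute ι (q - ι * q * ι) := by
    change ι * _ = _ * ι
    rw [mul_sub, sub_mul, hxιι, mul_assoc ι q ι, hιι]
    abel
  have hanti : ι * (q + ι * q * ι) = -((q + ι * q * ι) * ι) := by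
    rw [mul_add, add_mul, hxιι, mul_assoc ι q ι, hιι]
    abel
  have hcomm' : Commute ι ((q + ι * q * ι) * j) := by
    change ι * _ = _ * ι
    rw [← mul_assoc, hanti, neg_mul, mul_assoc, hιj, mul_neg, neg_neg]
    exact (mul_assoc _ _ _).symm
  have h2 : Commute ι 2⁻¹ := (Nat.cast_commute 2 ι).inv_left₀.symm
  refine ⟨2⁻¹ * (q - ι * q * ι), (commute_iff_mem_Cslice hι).1 (h2.mul_right hcomm),
    -(2⁻¹ * ((q + ι * q * ι) * j)), (commute_iff_mem_Cslice hι).1 (h2.mul_right hcomm').neg_right,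
    ?_⟩
  have hw : -(2⁻¹ * ((q + ι * q * ι) * j)) * j = 2⁻¹ * (q + ι * q * ι) := by
    rw [neg_mul, mul_assoc, mul_assoc (q + ι * q * ι), ← sq, hj, mul_neg_one, mul_neg, neg_neg]
  rw [hw, ← mul_add,
    show q - ι * q * ι + (q + ι * q * ι) = 2 * q by rw [two_mul]; abel, ← mul_assoc,
    inv_mul_cancel₀ two_ne_zero, one_mul]

lemma Quaternion.eq_star_of_isSelfAdjoint {ι a b : ℍ} (hι : ι ^ 2 = -1) (hab : Commute ι (a - b))
    (h₁ : IsSelfAdjoint (a + b)) (h₂ : IsSelfAdjoint ((a - b) * ι)) : a = star b := by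
  have hstar : Commute ι (star (a - b)) := by
    have h := hab.star_star
    rwa [star_eq_neg_of_sq_eq_neg_one hι, Commute.neg_left_iff] at h
  have hd : a - b = -star (a - b) := by
    refine mul_right_cancel₀ (left_ne_zero_of_mul_eq_one (a := ι) (b := -ι) ?_) ?_
    · rw [mul_neg, ← sq, hι, neg_neg]
    · rw [← h₂.star_eq, star_mul, star_eq_neg_of_sq_eq_neg_one hι, neg_mul, hstar.eq, neg_mul]
  have h₁' := h₁.star_eq
  rw [star_add] at h₁'
  rw [star_sub] at hd
  have h : (a - star b) + (a - star b) = 0 := by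
    calc (a - star b) + (a - star b) = (a + b) + (a - b) - (star b + star b) := by abel
      _ = (star a + star b) + -(star a - star b) - (star b + star b) := by rw [← h₁', ← hd]
      _ = 0 := by abel
  rwa [add_self_eq_zero, sub_eq_zero] at h

namespace QHS

variable {H : Type} [NormedAddCommGroup H] (𝒮 : QHS H) {J T : H → H} {ι j : ℍ}

def smulRightHom (q : ℍ) : H →+ H := AddMonoidHom.mk' (𝒮.smul · q) fun u v => 𝒮.add_smul' u v q

def smulLeftHom (u : H) : ℍ →+ H := AddMonoidHom.mk' (𝒮.smul u) (𝒮.smul_add' u)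

def innRightHom (u : H) : H →+ ℍ := AddMonoidHom.mk' (𝒮.inn u) (𝒮.inn_add_right u)

lemma zero_smul (q : ℍ) : 𝒮.smul 0 q = 0 := (𝒮.smulRightHom q).map_zero

lemma neg_smul (u : H) (q : ℍ) : 𝒮.smul (-u) q = -𝒮.smul u q := (𝒮.smulRightHom q).map_neg u

lemma sub_smul (u v : H) (q : ℍ) : 𝒮.smul (u - v) q = 𝒮.smul u q - 𝒮.smul v q :=
  (𝒮.smulRightHom q).map_sub u v

lemma smul_neg (u : H) (q : ℍ) : 𝒮.smul u (-q) = -𝒮.smul u q := (𝒮.smulLeftHom u).map_neg q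

lemma smul_smul (u : H) (p q : ℍ) : 𝒮.smul (𝒮.smul u p) q = 𝒮.smul u (p * q) :=
  (𝒮.smul_mul' u p q).symm

lemma smul_neg_one (u : H) : 𝒮.smul u (-1) = -u := by rw [𝒮.smul_neg, 𝒮.smul_one']

lemma smul_add_self_inv_two (u : H) : 𝒮.smul (u + u) 2⁻¹ = u := by
  rw [← 𝒮.smul_one' u, ← 𝒮.smul_add', 𝒮.smul_smul, one_add_one_eq_two, mul_inv_cancel₀ two_ne_zero]

lemma inn_neg_right (u v : H) : 𝒮.inn u (-v) = -𝒮.inn u v := (𝒮.innRightHom u).map_neg v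

lemma inn_sub_right (u v w : H) : 𝒮.inn u (v - w) = 𝒮.inn u v - 𝒮.inn u w :=
  (𝒮.innRightHom u).map_sub v w

lemma inn_add_left (u v w : H) : 𝒮.inn (u + v) w = 𝒮.inn u w + 𝒮.inn v w := by
  rw [𝒮.inn_conj, 𝒮.inn_add_right, star_add, ← 𝒮.inn_conj, ← 𝒮.inn_conj]

lemma inn_sub_left (u v w : H) : 𝒮.inn (u - v) w = 𝒮.inn u w - 𝒮.inn v w := by
  rw [𝒮.inn_conj, 𝒮.inn_sub_right, star_sub, ← 𝒮.inn_conj, ← 𝒮.inn_conj]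

lemma inn_smul_left (u v : H) (q : ℍ) : 𝒮.inn (𝒮.smul u q) v = star q * 𝒮.inn u v := by
  rw [𝒮.inn_conj, 𝒮.inn_smul_right, star_mul, ← 𝒮.inn_conj]

lemma norm_smul (u : H) (q : ℍ) : ‖𝒮.smul u q‖ = ‖q‖ * ‖u‖ := by
  refine (pow_left_inj₀ (norm_nonneg _) (by positivity) two_ne_zero).mp ?_
  rw [𝒮.norm_sq', 𝒮.inn_smul_left, 𝒮.inn_smul_right, 𝒮.inn_self_real, Quaternion.coe_commutes,
    ← mul_assoc, Quaternion.star_mul_self, ← Quaternion.coe_mul, Quaternion.re_coe,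
    Quaternion.normSq_eq_norm_mul_self, mul_pow, 𝒮.norm_sq' u]
  ring

lemma eq_of_forall_inn_eq {v w : H} (h : ∀ u, 𝒮.inn u v = 𝒮.inn u w) : v = w := by
  have h0 : ‖v - w‖ ^ 2 = 0 := by
    rw [𝒮.norm_sq', 𝒮.inn_sub_right, h, sub_self, Quaternion.re_zero]
  rwa [sq_eq_zero_iff, norm_eq_zero, sub_eq_zero] at h0

lemma norm_sub_sq_of_re_inn_eq_zero {v w : H} (h : (𝒮.inn v w).re = 0) :
    ‖v - w‖ ^ 2 = ‖v‖ ^ 2 + ‖w‖ ^ 2 := by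
  have h' : (𝒮.inn w v).re = 0 := by rw [𝒮.inn_conj, Quaternion.re_star, h]
  rw [𝒮.norm_sq', 𝒮.norm_sq', 𝒮.norm_sq', 𝒮.inn_sub_left, 𝒮.inn_sub_right, 𝒮.inn_sub_right]
  simp only [Quaternion.re_sub, h, h']
  ring

section RightLinear

variable {𝒮} {A B : H → H}

lemma RightLinear.map_zero (hA : 𝒮.RightLinear A) : A 0 = 0 := (AddMonoidHom.mk' A hA.1).map_zero

lemma RightLinear.map_neg (hA : 𝒮.RightLinear A) (u : H) : A (-u) = -A u :=
  (AddMonoidHom.mk' A hA.1).map_neg u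

lemma RightLinear.map_sub (hA : 𝒮.RightLinear A) (u v : H) : A (u - v) = A u - A v :=
  (AddMonoidHom.mk' A hA.1).map_sub u v

lemma RightLinear.comp (hA : 𝒮.RightLinear A) (hB : 𝒮.RightLinear B) :
    𝒮.RightLinear fun u => A (B u) :=
  ⟨fun u v => (congrArg A (hB.1 u v)).trans (hA.1 _ _),
    fun u q => (congrArg A (hB.2 u q)).trans (hA.2 _ _)⟩

end RightLinear

lemma _root_.BoundedOp.comp {A B : H → H} (hA : BoundedOp A) (hB : BoundedOp B) :
    BoundedOp fun u => A (B u) := by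
  obtain ⟨C, hC⟩ := hA
  obtain ⟨D, hD⟩ := hB
  refine ⟨|C| * D, fun u => ?_⟩
  calc ‖A (B u)‖ ≤ |C| * ‖B u‖ := (hC _).trans (by gcongr; exact le_abs_self C)
    _ ≤ |C| * (D * ‖u‖) := by gcongr; exact hD u
    _ = |C| * D * ‖u‖ := by ring

lemma apply_apply_eq_neg (hJanti : 𝒮.AntiSelfAdjointOp J)
    (hJinn : ∀ u v, 𝒮.inn (J u) (J v) = 𝒮.inn u v) (u : H) : J (J u) = -u :=
  𝒮.eq_of_forall_inn_eq fun v => by rw [𝒮.inn_neg_right, ← hJinn v u, hJanti, neg_neg]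

section Hplus

variable {u v : H}

lemma zero_mem_Hplus (hJ : 𝒮.RightLinear J) : (0 : H) ∈ 𝒮.Hplus J ι := by
  rw [Hplus, Set.mem_ofPred_eq, hJ.map_zero, 𝒮.zero_smul]

lemma add_mem_Hplus (hJ : 𝒮.RightLinear J) (hu : u ∈ 𝒮.Hplus J ι) (hv : v ∈ 𝒮.Hplus J ι) :
    u + v ∈ 𝒮.Hplus J ι := by
  rw [Hplus, Set.mem_ofPred_eq, hJ.1, hu, hv, 𝒮.add_smul']

lemma neg_mem_Hplus (hJ : 𝒮.RightLinear J) (hu : u ∈ 𝒮.Hplus J ι) : -u ∈ 𝒮.Hplus J ι := by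
  rw [Hplus, Set.mem_ofPred_eq, hJ.map_neg, hu, 𝒮.neg_smul]

lemma smul_mem_Hplus (hJ : 𝒮.RightLinear J) {z : ℍ} (hz : Commute ι z) (hu : u ∈ 𝒮.Hplus J ι) :
    𝒮.smul u z ∈ 𝒮.Hplus J ι := by
  rw [Hplus, Set.mem_ofPred_eq, hJ.2, hu, 𝒮.smul_smul, hz.eq, 𝒮.smul_smul]

lemma smul_mem_Hminus_of_mem_Hplus (hJ : 𝒮.RightLinear J) (hιj : ι * j = -(j * ι))
    (hu : u ∈ 𝒮.Hplus J ι) : 𝒮.smul u j ∈ 𝒮.Hminus J ι := by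
  rw [Hminus, Set.mem_ofPred_eq, hJ.2, hu, 𝒮.smul_smul, hιj, 𝒮.smul_neg, 𝒮.smul_smul]

lemma smul_mem_Hplus_of_mem_Hminus (hJ : 𝒮.RightLinear J) (hιj : ι * j = -(j * ι))
    (hu : u ∈ 𝒮.Hminus J ι) : 𝒮.smul u j ∈ 𝒮.Hplus J ι := by
  rw [Hplus, Set.mem_ofPred_eq, hJ.2, hu, 𝒮.neg_smul, 𝒮.smul_smul, hιj, 𝒮.smul_neg, neg_neg,
    𝒮.smul_smul]

lemma smul_apply_eq_neg_of_mem_Hplus (hι : ι ^ 2 = -1) (hu : u ∈ 𝒮.Hplus J ι) :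
    𝒮.smul (J u) ι = -u := by
  rw [hu, 𝒮.smul_smul, ← sq, hι, 𝒮.smul_neg_one]

lemma smul_apply_eq_self_of_mem_Hminus (hι : ι ^ 2 = -1) (hu : u ∈ 𝒮.Hminus J ι) :
    𝒮.smul (J u) ι = u := by
  rw [hu, 𝒮.neg_smul, 𝒮.smul_smul, ← sq, hι, 𝒮.smul_neg_one, neg_neg]

lemma commute_inn_of_mem_Hplus (hJinn : ∀ u v, 𝒮.inn (J u) (J v) = 𝒮.inn u v)
    (hι : ι ^ 2 = -1) (hu : u ∈ 𝒮.Hplus J ι) (hv : v ∈ 𝒮.Hplus J ι) :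
    Commute ι (𝒮.inn u v) := by
  have h : 𝒮.inn u v = -(ι * 𝒮.inn u v * ι) :=
    calc 𝒮.inn u v = 𝒮.inn (J u) (J v) := (hJinn u v).symm
      _ = _ := by
        rw [hu, hv, 𝒮.inn_smul_left, 𝒮.inn_smul_right,
          Quaternion.star_eq_neg_of_sq_eq_neg_one hι, neg_mul, mul_assoc]
  change ι * _ = _ * ι
  conv_lhs => rw [h]
  rw [mul_neg, ← mul_assoc, ← mul_assoc, ← sq, hι, neg_one_mul, neg_mul, neg_neg]

lemma re_inn_eq_zero_of_mem_Hplus_of_mem_Hminus (hJinn : ∀ u v, 𝒮.inn (J u) (J v) = 𝒮.inn u v)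
    (hι : ι ^ 2 = -1) (hu : u ∈ 𝒮.Hplus J ι) (hv : v ∈ 𝒮.Hminus J ι) : (𝒮.inn u v).re = 0 := by
  have h : 𝒮.inn u v = ι * 𝒮.inn u v * ι :=
    calc 𝒮.inn u v = 𝒮.inn (J u) (J v) := (hJinn u v).symm
      _ = _ := by
        rw [hu, hv, 𝒮.inn_neg_right, 𝒮.inn_smul_left, 𝒮.inn_smul_right,
          Quaternion.star_eq_neg_of_sq_eq_neg_one hι, neg_mul, neg_neg, mul_assoc]
  have hre := congrArg QuaternionAlgebra.re h
  rw [Quaternion.re_mul_comm, ← mul_assoc, ← sq, hι, neg_one_mul, Quaternion.re_neg] at hre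
  linarith

end Hplus

variable (J ι)

noncomputable def plusPart (u : H) : H := 𝒮.smul (u - 𝒮.smul (J u) ι) 2⁻¹

noncomputable def minusPart (u : H) : H := 𝒮.smul (u + 𝒮.smul (J u) ι) 2⁻¹

variable {J ι}

lemma plusPart_add_minusPart (u : H) : 𝒮.plusPart J ι u + 𝒮.minusPart J ι u = u := by
  rw [plusPart, minusPart, ← 𝒮.add_smul', sub_add_add_cancel, 𝒮.smul_add_self_inv_two]

lemma plusPart_mem (hJ : 𝒮.RightLinear J) (hJJ : ∀ u, J (J u) = -u) (hι : ι ^ 2 = -1)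
    (u : H) : 𝒮.plusPart J ι u ∈ 𝒮.Hplus J ι := by
  rw [Hplus, Set.mem_ofPred_eq, plusPart, hJ.2, hJ.map_sub, hJ.2, hJJ, 𝒮.smul_smul _ 2⁻¹,
    Quaternion.inv_two_mul_comm, ← 𝒮.smul_smul, 𝒮.sub_smul u, 𝒮.smul_smul (J u), ← sq, hι,
    𝒮.smul_neg_one, 𝒮.neg_smul]
  congr 1
  abel

lemma minusPart_mem (hJ : 𝒮.RightLinear J) (hJJ : ∀ u, J (J u) = -u) (hι : ι ^ 2 = -1)
    (u : H) : 𝒮.minusPart J ι u ∈ 𝒮.Hminus J ι := by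
  rw [Hminus, Set.mem_ofPred_eq, minusPart, hJ.2, hJ.1, hJ.2, hJJ, 𝒮.neg_smul u ι,
    𝒮.smul_smul _ 2⁻¹, Quaternion.inv_two_mul_comm, ← 𝒮.smul_smul, 𝒮.add_smul' u,
    𝒮.smul_smul (J u), ← sq, hι, 𝒮.smul_neg_one, ← 𝒮.neg_smul (_ + _)]
  congr 1
  abel

lemma plusPart_sub (hJ : 𝒮.RightLinear J) (hι : ι ^ 2 = -1) {a b : H}
    (ha : a ∈ 𝒮.Hplus J ι) (hb : b ∈ 𝒮.Hminus J ι) : 𝒮.plusPart J ι (a - b) = a := by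
  rw [plusPart, hJ.map_sub, 𝒮.sub_smul (J a), 𝒮.smul_apply_eq_neg_of_mem_Hplus hι ha,
    𝒮.smul_apply_eq_self_of_mem_Hminus hι hb, show a - b - (-a - b) = a + a by abel,
    𝒮.smul_add_self_inv_two]

lemma minusPart_sub (hJ : 𝒮.RightLinear J) (hι : ι ^ 2 = -1) {a b : H}
    (ha : a ∈ 𝒮.Hplus J ι) (hb : b ∈ 𝒮.Hminus J ι) : 𝒮.minusPart J ι (a - b) = -b := by
  rw [minusPart, hJ.map_sub, 𝒮.sub_smul (J a), 𝒮.smul_apply_eq_neg_of_mem_Hplus hι ha,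
    𝒮.smul_apply_eq_self_of_mem_Hminus hι hb, show a - b + (-a - b) = -b + -b by abel,
    𝒮.smul_add_self_inv_two]

lemma exists_eq_sub_smul (hJ : 𝒮.RightLinear J) (hJJ : ∀ u, J (J u) = -u) (hι : ι ^ 2 = -1)
    (hj : j ^ 2 = -1) (hιj : ι * j = -(j * ι)) (u : H) :
    ∃ a ∈ 𝒮.Hplus J ι, ∃ c ∈ 𝒮.Hplus J ι, u = a - 𝒮.smul c j := by
  refine ⟨_, 𝒮.plusPart_mem hJ hJJ hι u, _,
    𝒮.smul_mem_Hplus_of_mem_Hminus hJ hιj (𝒮.minusPart_mem hJ hJJ hι u), ?_⟩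
  rw [𝒮.smul_smul, ← sq, hj, 𝒮.smul_neg_one, sub_neg_eq_add, 𝒮.plusPart_add_minusPart]

variable {𝒮} in
lemma RightLinear.eq_of_eqOn_Hplus {A B : H → H} (hA : 𝒮.RightLinear A) (hB : 𝒮.RightLinear B)
    (hJ : 𝒮.RightLinear J) (hJJ : ∀ u, J (J u) = -u) (hι : ι ^ 2 = -1) (hj : j ^ 2 = -1)
    (hιj : ι * j = -(j * ι)) (hAB : ∀ u ∈ 𝒮.Hplus J ι, A u = B u) : A = B := by
  funext u
  obtain ⟨a, ha, c, hc, rfl⟩ := 𝒮.exists_eq_sub_smul hJ hJJ hι hj hιj u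
  rw [hA.map_sub, hB.map_sub, hA.2, hB.2, hAB a ha, hAB c hc]

variable (J ι j) in
noncomputable def extension (T : H → H) (u : H) : H :=
  T (𝒮.plusPart J ι u) - 𝒮.smul (T (𝒮.smul (𝒮.minusPart J ι u) j)) j

section Extension

variable (hJ : 𝒮.RightLinear J) (hJJ : ∀ u, J (J u) = -u)
  (hJinn : ∀ u v, 𝒮.inn (J u) (J v) = 𝒮.inn u v) (hι : ι ^ 2 = -1) (hj : j ^ 2 = -1)
  (hιj : ι * j = -(j * ι)) (hTmaps : ∀ u ∈ 𝒮.Hplus J ι, T u ∈ 𝒮.Hplus J ι)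
  (hTadd : ∀ u ∈ 𝒮.Hplus J ι, ∀ v ∈ 𝒮.Hplus J ι, T (u + v) = T u + T v)
  (hTsmul : ∀ u ∈ 𝒮.Hplus J ι, ∀ c ∈ Cslice ι, T (𝒮.smul u c) = 𝒮.smul (T u) c)
include hJ hι

include hj hιj in
lemma extension_sub_smul {a c : H} (ha : a ∈ 𝒮.Hplus J ι) (hc : c ∈ 𝒮.Hplus J ι) :
    𝒮.extension J ι j T (a - 𝒮.smul c j) = T a - 𝒮.smul (T c) j := by
  have hcj := 𝒮.smul_mem_Hminus_of_mem_Hplus hJ hιj hc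
  rw [extension, 𝒮.plusPart_sub hJ hι ha hcj, 𝒮.minusPart_sub hJ hι ha hcj, 𝒮.neg_smul,
    𝒮.smul_smul, ← sq, hj, 𝒮.smul_neg_one, neg_neg]

include hj hιj hTadd in
lemma extension_eq_of_mem {u : H} (hu : u ∈ 𝒮.Hplus J ι) : 𝒮.extension J ι j T u = T u := by
  have h0 : (0 : H) ∈ 𝒮.Hplus J ι := 𝒮.zero_mem_Hplus hJ
  have hT0 : T 0 = 0 := by simpa using hTadd 0 h0 0 h0
  simpa [𝒮.zero_smul, hT0] using 𝒮.extension_sub_smul (T := T) hJ hι hj hιj hu h0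

include hJJ hj hιj hTadd in
lemma extension_add (u v : H) :
    𝒮.extension J ι j T (u + v) = 𝒮.extension J ι j T u + 𝒮.extension J ι j T v := by
  obtain ⟨a, ha, c, hc, rfl⟩ := 𝒮.exists_eq_sub_smul hJ hJJ hι hj hιj u
  obtain ⟨a', ha', c', hc', rfl⟩ := 𝒮.exists_eq_sub_smul hJ hJJ hι hj hιj v
  rw [show a - 𝒮.smul c j + (a' - 𝒮.smul c' j) = (a + a') - 𝒮.smul (c + c') j by
      rw [𝒮.add_smul']; abel,
    𝒮.extension_sub_smul hJ hι hj hιj (𝒮.add_mem_Hplus hJ ha ha') (𝒮.add_mem_Hplus hJ hc hc'),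
    𝒮.extension_sub_smul hJ hι hj hιj ha hc, 𝒮.extension_sub_smul hJ hι hj hιj ha' hc',
    hTadd a ha a' ha', hTadd c hc c' hc', 𝒮.add_smul']
  abel

include hJJ hj hιj hTsmul in
lemma extension_smul_of_mem_Cslice {z : ℍ} (hz : z ∈ Cslice ι) (u : H) :
    𝒮.extension J ι j T (𝒮.smul u z) = 𝒮.smul (𝒮.extension J ι j T u) z := by
  obtain ⟨a, ha, c, hc, rfl⟩ := 𝒮.exists_eq_sub_smul hJ hJJ hι hj hιj u
  have hz' := Quaternion.star_mem_Cslice hι hz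
  have hjz : j * z = star z * j := by
    rw [Quaternion.mul_eq_mul_star_of_mem_Cslice hι hιj hz', star_star]
  have hcomm {w : ℍ} (hw : w ∈ Cslice ι) := (Quaternion.commute_iff_mem_Cslice hι).2 hw
  rw [𝒮.sub_smul, 𝒮.smul_smul c j z, hjz, ← 𝒮.smul_smul c (star z) j,
    𝒮.extension_sub_smul hJ hι hj hιj (𝒮.smul_mem_Hplus hJ (hcomm hz) ha)
      (𝒮.smul_mem_Hplus hJ (hcomm hz') hc),
    𝒮.extension_sub_smul hJ hι hj hιj ha hc, hTsmul a ha z hz, hTsmul c hc _ hz',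
    𝒮.sub_smul (T a), 𝒮.smul_smul (T c) j z, hjz, 𝒮.smul_smul]

include hJJ hj hιj hTsmul in
lemma extension_smul_j (u : H) :
    𝒮.extension J ι j T (𝒮.smul u j) = 𝒮.smul (𝒮.extension J ι j T u) j := by
  obtain ⟨a, ha, c, hc, rfl⟩ := 𝒮.exists_eq_sub_smul hJ hJJ hι hj hιj u
  have hTneg : T (-a) = -T a := by
    have h := hTsmul a ha (-1) (Quaternion.neg_one_mem_Cslice ι)
    rwa [𝒮.smul_neg_one, 𝒮.smul_neg_one] at h
  rw [show 𝒮.smul (a - 𝒮.smul c j) j = c - 𝒮.smul (-a) j by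
      rw [𝒮.sub_smul, 𝒮.smul_smul c, ← sq, hj, 𝒮.smul_neg_one, 𝒮.neg_smul]; abel,
    𝒮.extension_sub_smul hJ hι hj hιj hc (𝒮.neg_mem_Hplus hJ ha),
    𝒮.extension_sub_smul hJ hι hj hιj ha hc, hTneg, 𝒮.neg_smul, 𝒮.sub_smul (T a),
    𝒮.smul_smul (T c), ← sq, hj, 𝒮.smul_neg_one]
  abel

include hJJ hj hιj hTadd hTsmul in
lemma rightLinear_extension : 𝒮.RightLinear (𝒮.extension J ι j T) := by
  refine ⟨𝒮.extension_add hJ hJJ hι hj hιj hTadd, fun u q => ?_⟩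
  obtain ⟨z₁, hz₁, z₂, hz₂, rfl⟩ := Quaternion.exists_mem_Cslice_add_mul hι hj hιj q
  rw [𝒮.smul_add', 𝒮.extension_add hJ hJJ hι hj hιj hTadd, ← 𝒮.smul_smul,
    𝒮.extension_smul_j hJ hJJ hι hj hιj hTsmul,
    𝒮.extension_smul_of_mem_Cslice hJ hJJ hι hj hιj hTsmul hz₁,
    𝒮.extension_smul_of_mem_Cslice hJ hJJ hι hj hιj hTsmul hz₂, 𝒮.smul_smul, ← 𝒮.smul_add']

include hJinn hj hιj in
lemma norm_sub_smul_sq {a c : H} (ha : a ∈ 𝒮.Hplus J ι) (hc : c ∈ 𝒮.Hplus J ι) :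
    ‖a - 𝒮.smul c j‖ ^ 2 = ‖a‖ ^ 2 + ‖c‖ ^ 2 := by
  rw [𝒮.norm_sub_sq_of_re_inn_eq_zero (𝒮.re_inn_eq_zero_of_mem_Hplus_of_mem_Hminus hJinn hι ha
    (𝒮.smul_mem_Hminus_of_mem_Hplus hJ hιj hc)), 𝒮.norm_smul,
    Quaternion.norm_eq_one_of_sq_eq_neg_one hj, one_mul]

include hJJ hJinn hj hιj hTmaps in
lemma norm_extension_le {C : ℝ} (hC : 0 ≤ C) (hT : ∀ u ∈ 𝒮.Hplus J ι, ‖T u‖ ≤ C * ‖u‖)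
    (u : H) : ‖𝒮.extension J ι j T u‖ ≤ C * ‖u‖ := by
  obtain ⟨a, ha, c, hc, rfl⟩ := 𝒮.exists_eq_sub_smul hJ hJJ hι hj hιj u
  have hsq {x : H} (hx : x ∈ 𝒮.Hplus J ι) : ‖T x‖ ^ 2 ≤ C ^ 2 * ‖x‖ ^ 2 := by
    rw [← mul_pow]; exact pow_le_pow_left₀ (norm_nonneg _) (hT x hx) 2
  rw [𝒮.extension_sub_smul hJ hι hj hιj ha hc]
  refine (pow_le_pow_iff_left₀ (norm_nonneg _) (by positivity) two_ne_zero).mp ?_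
  rw [𝒮.norm_sub_smul_sq hJ hJinn hι hj hιj (hTmaps a ha) (hTmaps c hc), mul_pow,
    𝒮.norm_sub_smul_sq hJ hJinn hι hj hιj ha hc, mul_add]
  exact add_le_add (hsq ha) (hsq hc)

include hJJ hJinn hj hιj hTmaps hTadd in
lemma opNorm_extension :
    opNorm (𝒮.extension J ι j T) =
      sInf {C : ℝ | 0 ≤ C ∧ ∀ u ∈ 𝒮.Hplus J ι, ‖T u‖ ≤ C * ‖u‖} := by
  refine congrArg sInf (Set.ext fun C => ⟨fun ⟨hC, h⟩ => ⟨hC, fun u hu => ?_⟩,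
    fun ⟨hC, h⟩ => ⟨hC, 𝒮.norm_extension_le hJ hJJ hJinn hι hj hιj hTmaps hC h⟩⟩)
  rw [← 𝒮.extension_eq_of_mem hJ hι hj hιj hTadd hu]
  exact h u

include hJJ hJinn hj hιj hTmaps in
lemma boundedOp_extension (hTbdd : ∃ C : ℝ, ∀ u ∈ 𝒮.Hplus J ι, ‖T u‖ ≤ C * ‖u‖) :
    BoundedOp (𝒮.extension J ι j T) := by
  obtain ⟨C, hC⟩ := hTbdd
  exact ⟨max C 0, 𝒮.norm_extension_le hJ hJJ hJinn hι hj hιj hTmaps (le_max_right C 0)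
    fun u hu => (hC u hu).trans (by gcongr; exact le_max_left C 0)⟩

include hJJ hj hιj hTmaps hTadd hTsmul in
lemma apply_extension_eq_extension_apply (u : H) :
    J (𝒮.extension J ι j T u) = 𝒮.extension J ι j T (J u) := by
  have hTe := 𝒮.rightLinear_extension hJ hJJ hι hj hιj hTadd hTsmul
  refine congrFun (RightLinear.eq_of_eqOn_Hplus (hJ.comp hTe) (hTe.comp hJ) hJ hJJ hι hj hιj
    fun v hv => ?_) u
  rw [𝒮.extension_eq_of_mem hJ hι hj hιj hTadd hv, hTmaps v hv, hv, hTe.2,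
    𝒮.extension_eq_of_mem hJ hι hj hιj hTadd hv]

include hJJ hj hιj in
lemma adjointPair_extension {S Se : H → H}
    (hST : ∀ u ∈ 𝒮.Hplus J ι, ∀ v ∈ 𝒮.Hplus J ι, 𝒮.inn (S u) v = 𝒮.inn u (T v))
    (hSe : 𝒮.RightLinear Se) (hSeS : ∀ u ∈ 𝒮.Hplus J ι, Se u = S u) :
    𝒮.AdjointPair (𝒮.extension J ι j T) Se := by
  have hdec := 𝒮.exists_eq_sub_smul hJ hJJ hι hj hιj
  have hS : ∀ x ∈ 𝒮.Hplus J ι, ∀ v, 𝒮.inn (S x) v = 𝒮.inn x (𝒮.extension J ι j T v) := by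
    intro x hx v
    obtain ⟨a, ha, c, hc, rfl⟩ := hdec v
    rw [𝒮.extension_sub_smul hJ hι hj hιj ha hc, 𝒮.inn_sub_right, 𝒮.inn_sub_right,
      𝒮.inn_smul_right, 𝒮.inn_smul_right, hST x hx a ha, hST x hx c hc]
  intro u v
  obtain ⟨a, ha, c, hc, rfl⟩ := hdec u
  rw [hSe.map_sub, hSe.2, hSeS a ha, hSeS c hc, 𝒮.inn_sub_left, 𝒮.inn_sub_left,
    𝒮.inn_smul_left, 𝒮.inn_smul_left, hS a ha, hS c hc]

/- Polarisation: positivity at `x + y` and at `x + y ι` makes `⟨x|T y⟩ + ⟨y|T x⟩` and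
`(⟨x|T y⟩ - ⟨y|T x⟩) ι` real. -/
include hJinn hTmaps hTadd hTsmul in
lemma inn_apply_eq_star_of_positiveOn (hTpos : 𝒮.PositiveOn T (𝒮.Hplus J ι)) {x y : H}
    (hx : x ∈ 𝒮.Hplus J ι) (hy : y ∈ 𝒮.Hplus J ι) :
    𝒮.inn x (T y) = star (𝒮.inn y (T x)) := by
  have hreal (w : H) (hw : w ∈ 𝒮.Hplus J ι) : IsSelfAdjoint (𝒮.inn w (T w)) :=
    Quaternion.star_eq_self.mpr (hTpos w hw).1
  have hyι := 𝒮.smul_mem_Hplus hJ (Commute.refl ι) hy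
  have hb : Commute ι (𝒮.inn y (T x)) := 𝒮.commute_inn_of_mem_Hplus hJinn hι hy (hTmaps x hx)
  refine Quaternion.eq_star_of_isSelfAdjoint hι
    ((𝒮.commute_inn_of_mem_Hplus hJinn hι hx (hTmaps y hy)).sub_right hb) ?_ ?_
  · have e : 𝒮.inn x (T y) + 𝒮.inn y (T x) =
        𝒮.inn (x + y) (T (x + y)) - 𝒮.inn x (T x) - 𝒮.inn y (T y) := by
      rw [hTadd x hx y hy, 𝒮.inn_add_left, 𝒮.inn_add_right, 𝒮.inn_add_right]; abel
    rw [e]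
    exact ((hreal _ (𝒮.add_mem_Hplus hJ hx hy)).sub (hreal x hx)).sub (hreal y hy)
  · obtain ⟨t, ht⟩ : ∃ t : ℝ, 𝒮.inn y (T y) = t := ⟨_, (hTpos y hy).1⟩
    have e : (𝒮.inn x (T y) - 𝒮.inn y (T x)) * ι =
        𝒮.inn (x + 𝒮.smul y ι) (T (x + 𝒮.smul y ι)) - 𝒮.inn x (T x) - 𝒮.inn y (T y) := by
      rw [hTadd x hx _ hyι, hTsmul y hy ι (Quaternion.mem_Cslice_self ι), 𝒮.inn_add_left,
        𝒮.inn_add_right, 𝒮.inn_add_right, 𝒮.inn_smul_right, 𝒮.inn_smul_left,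
        𝒮.inn_smul_left, 𝒮.inn_smul_right, Quaternion.star_eq_neg_of_sq_eq_neg_one hι, ht,
        Quaternion.coe_commutes, neg_mul, neg_mul, hb.eq, ← mul_assoc, ← sq, hι, neg_one_mul,
        neg_neg, sub_mul]
      abel
    rw [e]
    exact ((hreal _ (𝒮.add_mem_Hplus hJ hx hyι)).sub (hreal x hx)).sub (hreal y hy)

include hJJ hJinn hj hιj hTmaps hTadd hTsmul in
lemma positiveOp_extension (hTpos : 𝒮.PositiveOn T (𝒮.Hplus J ι)) :
    𝒮.PositiveOp (𝒮.extension J ι j T) := by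
  intro u
  obtain ⟨a, ha, c, hc, rfl⟩ := 𝒮.exists_eq_sub_smul hJ hJJ hι hj hιj u
  obtain ⟨s, hs⟩ : ∃ s : ℝ, 𝒮.inn a (T a) = s := ⟨_, (hTpos a ha).1⟩
  obtain ⟨t, ht⟩ : ∃ t : ℝ, 𝒮.inn c (T c) = t := ⟨_, (hTpos c hc).1⟩
  have hz : 𝒮.inn a (T c) ∈ Cslice ι := (Quaternion.commute_iff_mem_Cslice hι).1
    (𝒮.commute_inn_of_mem_Hplus hJinn hι ha (hTmaps c hc))
  have e :
      𝒮.inn (a - 𝒮.smul c j) (𝒮.extension J ι j T (a - 𝒮.smul c j)) = ((s + t : ℝ) : ℍ) := by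
    rw [𝒮.extension_sub_smul hJ hι hj hιj ha hc, 𝒮.inn_sub_left, 𝒮.inn_sub_right,
      𝒮.inn_sub_right, 𝒮.inn_smul_left, 𝒮.inn_smul_left, 𝒮.inn_smul_right, 𝒮.inn_smul_right,
      𝒮.inn_apply_eq_star_of_positiveOn hJ hJinn hι hTmaps hTadd hTsmul hTpos hc ha,
      Quaternion.star_eq_neg_of_sq_eq_neg_one hj, hs, ht, neg_mul, neg_mul,
      ← Quaternion.mul_eq_mul_star_of_mem_Cslice hι hιj hz, ← mul_assoc,
      ← Quaternion.coe_commutes, mul_assoc, ← sq, hj, mul_neg_one, Quaternion.coe_add]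
    abel
  have hs0 : 0 ≤ s := by simpa [hs] using (hTpos a ha).2
  have ht0 : 0 ≤ t := by simpa [ht] using (hTpos c hc).2
  rw [e, Quaternion.re_coe]
  exact ⟨rfl, add_nonneg hs0 ht0⟩

end Extension

end QHS

theorem extension_of_complex_linear_operators_general
    {H : Type} [NormedAddCommGroup H] (𝒮 : QHS H)
    (J : H → H) (hJlin : 𝒮.RightLinear J)
    (hJanti : 𝒮.AntiSelfAdjointOp J) (hJuni : 𝒮.UnitaryOp J)
    (ι : ℍ) (hι : ι ^ 2 = -1)
    (T : H → H)
    (hTmaps : ∀ u ∈ 𝒮.Hplus J ι, T u ∈ 𝒮.Hplus J ι)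
    (hTadd : ∀ u ∈ 𝒮.Hplus J ι, ∀ v ∈ 𝒮.Hplus J ι, T (u + v) = T u + T v)
    (hTsmul : ∀ u ∈ 𝒮.Hplus J ι, ∀ c ∈ Cslice ι, T (𝒮.smul u c) = 𝒮.smul (T u) c)
    (hTbdd : ∃ C : ℝ, ∀ u ∈ 𝒮.Hplus J ι, ‖T u‖ ≤ C * ‖u‖) :
    (∃! Te : H → H, 𝒮.RightLinear Te ∧ BoundedOp Te ∧ ∀ u ∈ 𝒮.Hplus J ι, Te u = T u) ∧
    ∀ Te : H → H, (𝒮.RightLinear Te ∧ BoundedOp Te ∧ ∀ u ∈ 𝒮.Hplus J ι, Te u = T u) →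
      -- (a) ‖T̃‖ = ‖T‖
      (opNorm Te = sInf {C : ℝ | 0 ≤ C ∧ ∀ u ∈ 𝒮.Hplus J ι, ‖T u‖ ≤ C * ‖u‖}) ∧
      -- (b) J T̃ = T̃ J
      (∀ u : H, J (Te u) = Te (J u)) ∧
      -- (c) (T̃)* = (T*)~ : if S is the adjoint of T on H₊ then any extension Se of S
      -- is the adjoint of Te
      (∀ S Se : H → H,
        (∀ u ∈ 𝒮.Hplus J ι, S u ∈ 𝒮.Hplus J ι) →
        (∀ u ∈ 𝒮.Hplus J ι, ∀ v ∈ 𝒮.Hplus J ι, 𝒮.inn (S u) v = 𝒮.inn u (T v)) →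
        (𝒮.RightLinear Se ∧ BoundedOp Se ∧ ∀ u ∈ 𝒮.Hplus J ι, Se u = S u) →
        𝒮.AdjointPair Te Se) ∧
      -- (d) (S T)~ = S̃ T̃ for every bounded ℂ_ι-linear S on H₊
      (∀ S Se : H → H,
        (∀ u ∈ 𝒮.Hplus J ι, S u ∈ 𝒮.Hplus J ι) →
        (∀ u ∈ 𝒮.Hplus J ι, ∀ v ∈ 𝒮.Hplus J ι, S (u + v) = S u + S v) →
        (∀ u ∈ 𝒮.Hplus J ι, ∀ c ∈ Cslice ι, S (𝒮.smul u c) = 𝒮.smul (S u) c) →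
        (∃ C : ℝ, ∀ u ∈ 𝒮.Hplus J ι, ‖S u‖ ≤ C * ‖u‖) →
        (𝒮.RightLinear Se ∧ BoundedOp Se ∧ ∀ u ∈ 𝒮.Hplus J ι, Se u = S u) →
        (𝒮.RightLinear (fun u => Se (Te u)) ∧ BoundedOp (fun u => Se (Te u)) ∧
          ∀ u ∈ 𝒮.Hplus J ι, Se (Te u) = S (T u))) ∧
      -- (e) T̃ ≥ 0 whenever T ≥ 0
      ((∀ u ∈ 𝒮.Hplus J ι,
          𝒮.inn u (T u) = ((((𝒮.inn u (T u)).re : ℝ)) : ℍ) ∧ 0 ≤ (𝒮.inn u (T u)).re) →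
        𝒮.PositiveOp Te) := by
  obtain ⟨j, hj, hιj⟩ := Quaternion.exists_sq_eq_neg_one_anticomm hι
  have hJinn := hJuni.2.2
  have hJJ := 𝒮.apply_apply_eq_neg hJanti hJinn
  have hTe : 𝒮.RightLinear (𝒮.extension J ι j T) ∧ BoundedOp (𝒮.extension J ι j T) ∧
      ∀ u ∈ 𝒮.Hplus J ι, 𝒮.extension J ι j T u = T u :=
    ⟨𝒮.rightLinear_extension hJlin hJJ hι hj hιj hTadd hTsmul,
      𝒮.boundedOp_extension hJlin hJJ hJinn hι hj hιj hTmaps hTbdd,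
      fun u hu => 𝒮.extension_eq_of_mem hJlin hι hj hιj hTadd hu⟩
  have huniq : ∀ Te : H → H, 𝒮.RightLinear Te ∧ BoundedOp Te ∧
      (∀ u ∈ 𝒮.Hplus J ι, Te u = T u) → Te = 𝒮.extension J ι j T :=
    fun Te h => h.1.eq_of_eqOn_Hplus hTe.1 hJlin hJJ hι hj hιj
      fun u hu => (h.2.2 u hu).trans (hTe.2.2 u hu).symm
  refine ⟨⟨_, hTe, huniq⟩, fun Te h => ?_⟩
  obtain rfl := huniq Te h
  refine ⟨𝒮.opNorm_extension hJlin hJJ hJinn hι hj hιj hTmaps hTadd,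
    𝒮.apply_extension_eq_extension_apply hJlin hJJ hι hj hιj hTmaps hTadd hTsmul,
    fun S Se _ hST hSe => 𝒮.adjointPair_extension hJlin hJJ hι hj hιj hST hSe.1 hSe.2.2,
    fun S Se _ _ _ _ hSe => ⟨hSe.1.comp hTe.1, hSe.2.1.comp hTe.2.1, fun u hu => ?_⟩,
    𝒮.positiveOp_extension hJlin hJJ hJinn hι hj hιj hTmaps hTadd hTsmul⟩
  rw [hTe.2.2 u hu, hSe.2.2 _ (hTmaps u hu)]

/-- **extension of ℂ_ι-linear operators on `H₊^{Jι}`.**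
Every bounded `ℂ_ι`-linear operator `T` on `H₊ = {u : J u = u ι}` admits a unique bounded
right ℍ-linear extension `T̃` to `H`; moreover `‖T̃‖ = ‖T‖`, `J T̃ = T̃ J`,
`(T̃)* = (T*)~`, `(S T)~ = S̃ T̃`, and `T̃ ≥ 0` whenever `T ≥ 0`. -/
theorem extension_of_complex_linear_operators
    {H : Type} [NormedAddCommGroup H] [CompleteSpace H] (𝒮 : QHS H)
    (J : H → H) (hJlin : 𝒮.RightLinear J) (hJbdd : BoundedOp J)
    (hJanti : 𝒮.AntiSelfAdjointOp J) (hJuni : 𝒮.UnitaryOp J)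
    (ι : ℍ) (hι : ι ^ 2 = -1)
    (T : H → H)
    (hTmaps : ∀ u ∈ 𝒮.Hplus J ι, T u ∈ 𝒮.Hplus J ι)
    (hTadd : ∀ u ∈ 𝒮.Hplus J ι, ∀ v ∈ 𝒮.Hplus J ι, T (u + v) = T u + T v)
    (hTsmul : ∀ u ∈ 𝒮.Hplus J ι, ∀ c ∈ Cslice ι, T (𝒮.smul u c) = 𝒮.smul (T u) c)
    (hTbdd : ∃ C : ℝ, ∀ u ∈ 𝒮.Hplus J ι, ‖T u‖ ≤ C * ‖u‖) :
    (∃! Te : H → H, 𝒮.RightLinear Te ∧ BoundedOp Te ∧ ∀ u ∈ 𝒮.Hplus J ι, Te u = T u) ∧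
    ∀ Te : H → H, (𝒮.RightLinear Te ∧ BoundedOp Te ∧ ∀ u ∈ 𝒮.Hplus J ι, Te u = T u) →
      -- (a) ‖T̃‖ = ‖T‖
      (opNorm Te = sInf {C : ℝ | 0 ≤ C ∧ ∀ u ∈ 𝒮.Hplus J ι, ‖T u‖ ≤ C * ‖u‖}) ∧
      -- (b) J T̃ = T̃ J
      (∀ u : H, J (Te u) = Te (J u)) ∧
      -- (c) (T̃)* = (T*)~ : if S is the adjoint of T on H₊ then any extension Se of S
      -- is the adjoint of Te
      (∀ S Se : H → H,
        (∀ u ∈ 𝒮.Hplus J ι, S u ∈ 𝒮.Hplus J ι) →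
        (∀ u ∈ 𝒮.Hplus J ι, ∀ v ∈ 𝒮.Hplus J ι, 𝒮.inn (S u) v = 𝒮.inn u (T v)) →
        (𝒮.RightLinear Se ∧ BoundedOp Se ∧ ∀ u ∈ 𝒮.Hplus J ι, Se u = S u) →
        𝒮.AdjointPair Te Se) ∧
      -- (d) (S T)~ = S̃ T̃ for every bounded ℂ_ι-linear S on H₊
      (∀ S Se : H → H,
        (∀ u ∈ 𝒮.Hplus J ι, S u ∈ 𝒮.Hplus J ι) →
        (∀ u ∈ 𝒮.Hplus J ι, ∀ v ∈ 𝒮.Hplus J ι, S (u + v) = S u + S v) →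
        (∀ u ∈ 𝒮.Hplus J ι, ∀ c ∈ Cslice ι, S (𝒮.smul u c) = 𝒮.smul (S u) c) →
        (∃ C : ℝ, ∀ u ∈ 𝒮.Hplus J ι, ‖S u‖ ≤ C * ‖u‖) →
        (𝒮.RightLinear Se ∧ BoundedOp Se ∧ ∀ u ∈ 𝒮.Hplus J ι, Se u = S u) →
        (𝒮.RightLinear (fun u => Se (Te u)) ∧ BoundedOp (fun u => Se (Te u)) ∧
          ∀ u ∈ 𝒮.Hplus J ι, Se (Te u) = S (T u))) ∧
      -- (e) T̃ ≥ 0 whenever T ≥ 0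
      ((∀ u ∈ 𝒮.Hplus J ι,
          𝒮.inn u (T u) = ((((𝒮.inn u (T u)).re : ℝ)) : ℍ) ∧ 0 ≤ (𝒮.inn u (T u)).re) →
        𝒮.PositiveOp Te) :=
  extension_of_complex_linear_operators_general 𝒮 J hJlin hJanti hJuni ι hι T hTmaps hTadd hTsmul
    hTbdd
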